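/- Haar moments in the local projector basis: tr(P_a M_H(P_b)) = D_a D_b / D_∨ if |a| and |b| are both even, D_a D_b / D_∧ if both odd, and 0 otherwise, where D_{∨/∧} = q^n(q^n ± 1)/2. -/
import Mathlib


open Matrix Finset

/-- `F_x = ⊗_{i=1}^n F^{x_i}` acting on `(ℂ^q ⊗ ℂ^q)^{⊗n}`. -/
def Fx (q n : ℕ) (x : Fin n → Bool) :
    Matrix ((Fin n → Fin q) × (Fin n → Fin q)) ((Fin n → Fin q) × (Fin n → Fin q)) ℂ :=
  fun p r => ∏ s : Fin n,
    if (if x s then p.1 s = r.2 s ∧ p.2 s = r.1 s else p.1 s = r.1 s ∧ p.2 s = r.2 s)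
    then 1 else 0

/-- `P_a = ⊗_{i=1}^n (1 + (−1)^{a_i} F)/2` on `(ℂ^q ⊗ ℂ^q)^{⊗n}`. -/
noncomputable def Pa (q n : ℕ) (a : Fin n → Bool) :
    Matrix ((Fin n → Fin q) × (Fin n → Fin q)) ((Fin n → Fin q) × (Fin n → Fin q)) ℂ :=
  fun p r => ∏ s : Fin n,
    ((if p.1 s = r.1 s ∧ p.2 s = r.2 s then 1 else 0)
      + (if a s then -1 else 1) * (if p.1 s = r.2 s ∧ p.2 s = r.1 s then 1 else 0)) / 2

/-- The Hamming weight of `a ∈ 𝔽₂ⁿ`. -/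
def hammingWt {n : ℕ} (a : Fin n → Bool) : ℕ := (Finset.univ.filter fun s => a s = true).card

lemma hFx (q n : ℕ) (p t : (Fin n → Fin q) × (Fin n → Fin q)) :
    Fx q n (fun _ => true) p t = if t = (p.2, p.1) then 1 else 0 := by
  simp only [Fx, if_true]
  rw [Finset.prod_boole]
  by_cases h : t = (p.2, p.1)
  · subst h; simp
  · rw [if_neg h, if_neg]
    intro hc
    apply h
    ext s
    · exact congrArg Fin.val (hc s (mem_univ s)).2.symm
    · exact congrArg Fin.val (hc s (mem_univ s)).1.symm

lemma Fx_mul_Pa (q n : ℕ) (b : Fin n → Bool) :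
    Fx q n (fun _ => true) * Pa q n b = ((-1 : ℂ) ^ hammingWt b) • Pa q n b := by
  ext p r
  rw [Matrix.mul_apply, Matrix.smul_apply, smul_eq_mul]
  simp only [hFx, ite_mul, one_mul, zero_mul]
  rw [Finset.sum_ite_eq' Finset.univ (p.2, p.1) (fun t => Pa q n b t r), if_pos (mem_univ _)]
  show Pa q n b (p.2, p.1) r = _
  unfold Pa hammingWt
  have : ∀ s : Fin n,
      ((if p.2 s = r.1 s ∧ p.1 s = r.2 s then (1:ℂ) else 0)
        + (if b s then -1 else 1) * (if p.2 s = r.2 s ∧ p.1 s = r.1 s then 1 else 0)) / 2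
      = (if b s then (-1:ℂ) else 1) *
        (((if p.1 s = r.1 s ∧ p.2 s = r.2 s then 1 else 0)
          + (if b s then -1 else 1) * (if p.1 s = r.2 s ∧ p.2 s = r.1 s then 1 else 0)) / 2) := by
    intro s
    rw [if_congr (show (p.2 s = r.1 s ∧ p.1 s = r.2 s) ↔ (p.1 s = r.2 s ∧ p.2 s = r.1 s) from and_comm) rfl rfl,
      if_congr (show (p.2 s = r.2 s ∧ p.1 s = r.1 s) ↔ (p.1 s = r.1 s ∧ p.2 s = r.2 s) from and_comm) rfl rfl]
    cases hb : b s <;> simp only [if_true, if_false, Bool.false_eq_true] <;> ring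
  rw [Finset.prod_congr rfl (fun s _ => this s), Finset.prod_mul_distrib,
    Finset.prod_ite, Finset.prod_const, Finset.prod_const, one_pow, mul_one]

/-- Haar moments in the local projector basis:
`tr(P_a M_H(P_b)) = D_a D_b / D∨` if `|a|, |b|` both even, `D_a D_b / D∧`
if both odd, and `0` otherwise, where `M_H(A) = (tr(P∨A)/D∨)P∨ + (tr(P∧A)/D∧)P∧`
with the global (anti)symmetric projectors `P∨/∧ = (1 ± F₁)/2` and
`D∨/∧ = qⁿ(qⁿ ± 1)/2`. -/
theorem stmt_17 (q n : ℕ) (hq : 2 ≤ q) (hn : 1 ≤ n) (a b : Fin n → Bool)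
    (Psym Pasym : Matrix ((Fin n → Fin q) × (Fin n → Fin q))
      ((Fin n → Fin q) × (Fin n → Fin q)) ℂ)
    (hPsym : Psym = (1/2 : ℂ) • (1 + Fx q n (fun _ => true)))
    (hPasym : Pasym = (1/2 : ℂ) • (1 - Fx q n (fun _ => true)))
    (Dsym Dasym : ℂ)
    (hDsym : Dsym = (q : ℂ) ^ n * ((q : ℂ) ^ n + 1) / 2)
    (hDasym : Dasym = (q : ℂ) ^ n * ((q : ℂ) ^ n - 1) / 2)
    (MH : Matrix ((Fin n → Fin q) × (Fin n → Fin q))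
        ((Fin n → Fin q) × (Fin n → Fin q)) ℂ →
      Matrix ((Fin n → Fin q) × (Fin n → Fin q))
        ((Fin n → Fin q) × (Fin n → Fin q)) ℂ)
    (hMH : ∀ A, MH A = ((Psym * A).trace / Dsym) • Psym
      + ((Pasym * A).trace / Dasym) • Pasym) :
    (Pa q n a * MH (Pa q n b)).trace =
      if Even (hammingWt a) ∧ Even (hammingWt b) then
        (Pa q n a).trace * (Pa q n b).trace / Dsym
      else if Odd (hammingWt a) ∧ Odd (hammingWt b) then
        (Pa q n a).trace * (Pa q n b).trace / Dasym
      else 0 := by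
  have key : ∀ c : Fin n → Bool,
      (Psym * Pa q n c).trace = (1 + (-1 : ℂ) ^ hammingWt c) / 2 * (Pa q n c).trace ∧
      (Pasym * Pa q n c).trace = (1 - (-1 : ℂ) ^ hammingWt c) / 2 * (Pa q n c).trace := by
    intro c
    constructor
    · rw [hPsym, Matrix.smul_mul, Matrix.add_mul, Matrix.one_mul, Fx_mul_Pa,
        Matrix.trace_smul, Matrix.trace_add, Matrix.trace_smul, smul_eq_mul, smul_eq_mul]
      ring
    · rw [hPasym, Matrix.smul_mul, Matrix.sub_mul, Matrix.one_mul, Fx_mul_Pa,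
        Matrix.trace_smul, Matrix.trace_sub, Matrix.trace_smul, smul_eq_mul, smul_eq_mul]
      ring
  rw [hMH, Matrix.mul_add, Matrix.mul_smul, Matrix.mul_smul, Matrix.trace_add,
    Matrix.trace_smul, Matrix.trace_smul, smul_eq_mul, smul_eq_mul,
    Matrix.trace_mul_comm (Pa q n a) Psym, Matrix.trace_mul_comm (Pa q n a) Pasym,
    (key a).1, (key a).2, (key b).1, (key b).2]
  rcases Nat.even_or_odd (hammingWt a) with ha | ha <;>
    rcases Nat.even_or_odd (hammingWt b) with hb | hb
  · rw [if_pos ⟨ha, hb⟩, ha.neg_one_pow, hb.neg_one_pow]; ring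
  · rw [if_neg (fun h => (Nat.not_odd_iff_even.mpr h.2) hb),
      if_neg (fun h => (Nat.not_even_iff_odd.mpr h.1) ha),
      ha.neg_one_pow, hb.neg_one_pow]; ring
  · rw [if_neg (fun h => (Nat.not_even_iff_odd.mpr ha) h.1),
      if_neg (fun h => (Nat.not_odd_iff_even.mpr hb) h.2),
      ha.neg_one_pow, hb.neg_one_pow]; ring
  · rw [if_neg (fun h => (Nat.not_even_iff_odd.mpr ha) h.1), if_pos ⟨ha, hb⟩,
      ha.neg_one_pow, hb.neg_one_pow]; ring
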